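/- For d-admissible arcs x and y, one has Ext^i(x,y) = 0 for all i ∈ {w, w+1, …, 0} if and only if x and y do not cross and do not share a vertex. -/

import Mathlib

/- Combinatorial model of the triangulated category `T_w` generated by a `w`-spherical
object (`w ≤ -1`), via `d`-admissible arcs of the ∞-gon, where `d = w - 1`,
`|d| = 1 - w`, `|w| = -w`. -/

namespace SphericalArcs

/-- An arc is a pair of integers `(t, u)`. -/
abbrev Arc : Type := ℤ × ℤ

/-- `(t,u)` is a `d`-admissible arc: `t > u`, `t - u ≥ |d| - 1 = -w` and
`t - u ≡ -1 (mod |d|)`, i.e. `(1 - w) ∣ (t - u + 1)`. -/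
def Adm (w : ℤ) (a : Arc) : Prop :=
  a.2 < a.1 ∧ -w ≤ a.1 - a.2 ∧ (1 - w) ∣ (a.1 - a.2 + 1)

/-- `k(t,u) = (t - u + 1) / |d|`. -/
def kk (w : ℤ) (a : Arc) : ℤ := (a.1 - a.2 + 1) / (1 - w)

/-- `c ∈ F⁺(a)`: `c = (x,y)` is `d`-admissible, `x = a.1 + i·d` for some
`0 ≤ i ≤ k(a) - 1`, and `y ≤ a.2`. -/
def Fplus (w : ℤ) (a c : Arc) : Prop :=
  Adm w c ∧ (∃ i : ℤ, 0 ≤ i ∧ i ≤ kk w a - 1 ∧ c.1 = a.1 + i * (w - 1)) ∧ c.2 ≤ a.2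

/-- `c ∈ F⁻(a)`: `c = (x,y)` is `d`-admissible, `y = a.2 - i·d` for some
`0 ≤ i ≤ k(a) - 1`, and `x ≥ a.1`. -/
def Fminus (w : ℤ) (a c : Arc) : Prop :=
  Adm w c ∧ (∃ i : ℤ, 0 ≤ i ∧ i ≤ kk w a - 1 ∧ c.2 = a.2 - i * (w - 1)) ∧ a.1 ≤ c.1

/-- The Serre functor: `S(t,u) = (t - w, u - w)`. -/
def Serre (w : ℤ) (a : Arc) : Arc := (a.1 - w, a.2 - w)

/-- `Hom(a,c) ≠ 0` iff `c ∈ F⁺(a) ∪ F⁻(S(a))`. -/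
def HomNe (w : ℤ) (a c : Arc) : Prop := Fplus w a c ∨ Fminus w (Serre w a) c

/-- `Ext^j(a,b) ≠ 0` iff `Hom(a, Σ^j b) ≠ 0`, where `Σ^j b = (b.1 - j, b.2 - j)`. -/
def ExtNe (w : ℤ) (j : ℤ) (a b : Arc) : Prop := HomNe w a (b.1 - j, b.2 - j)

/-- Two arcs `(t,u)` and `(t',u')` cross if `u < u' < t < t'` or `u' < u < t' < t`. -/
def Cross (a b : Arc) : Prop :=
  (a.2 < b.2 ∧ b.2 < a.1 ∧ a.1 < b.1) ∨ (b.2 < a.2 ∧ a.2 < b.1 ∧ b.1 < a.1)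

/-- Two arcs share a vertex if `{t,u} ∩ {t',u'} ≠ ∅`. -/
def ShareVertex (a b : Arc) : Prop :=
  a.1 = b.1 ∨ a.1 = b.2 ∨ a.2 = b.1 ∨ a.2 = b.2

/-- A `|w|`-Hom-configuration: a set `H` of `d`-admissible arcs such that a
`d`-admissible arc `h` belongs to `H` iff `Ext^i(x,h) = 0` for every `x ∈ H` and
`i ∈ {w+1, …, -1}`, and `Ext^i(x,h) = 0` for every `x ∈ H \ {h}` and `i ∈ {0, w}`. -/
def IsHomConfig (w : ℤ) (H : Set Arc) : Prop :=
  (∀ h ∈ H, Adm w h) ∧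
  ∀ h : Arc, Adm w h →
    (h ∈ H ↔
      (∀ x ∈ H, ∀ i : ℤ, w + 1 ≤ i → i ≤ -1 → ¬ ExtNe w i x h) ∧
      (∀ x ∈ H, x ≠ h → ¬ ExtNe w 0 x h ∧ ¬ ExtNe w w x h))

/-- `v` is an isolated vertex of `H`: it is not an endpoint of any arc of `H`. -/
def Isolated (H : Set Arc) (v : ℤ) : Prop := ∀ a ∈ H, a.1 ≠ v ∧ a.2 ≠ v

/-- `a ∈ H` is an overarc of `v`: `a.2 < v < a.1`. -/
def IsOverarc (H : Set Arc) (a : Arc) (v : ℤ) : Prop := a ∈ H ∧ a.2 < v ∧ v < a.1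

/-- `a` is the smallest overarc of `v` in `H`. -/
def IsSmallestOverarc (H : Set Arc) (a : Arc) (v : ℤ) : Prop :=
  IsOverarc H a v ∧ ∀ b : Arc, IsOverarc H b v → b.2 ≤ a.2 ∧ a.1 ≤ b.1

/-- The set of isolated vertices of `H` having no overarc in `H`. -/
def NoOverarcIsolated (H : Set Arc) : Set ℤ :=
  {v | Isolated H v ∧ ∀ a : Arc, ¬ IsOverarc H a v}

/-- A left `|w|`-Riedtmann configuration. -/
def IsLeftRiedtmann (w : ℤ) (C : Set Arc) : Prop :=
  (∀ c ∈ C, Adm w c) ∧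
  (∀ x ∈ C, ∀ y ∈ C, x ≠ y → ∀ i : ℤ, w ≤ i → i ≤ 0 → ¬ ExtNe w i x y) ∧
  ∀ z : Arc, Adm w z → ∃ x ∈ C, ∃ i : ℤ, w + 1 ≤ i ∧ i ≤ 0 ∧ ExtNe w i x z

/-- A right `|w|`-Riedtmann configuration. -/
def IsRightRiedtmann (w : ℤ) (C : Set Arc) : Prop :=
  (∀ c ∈ C, Adm w c) ∧
  (∀ x ∈ C, ∀ y ∈ C, x ≠ y → ∀ i : ℤ, w ≤ i → i ≤ 0 → ¬ ExtNe w i x y) ∧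
  ∀ z : Arc, Adm w z → ∃ x ∈ C, ∃ i : ℤ, w + 1 ≤ i ∧ i ≤ 0 ∧ ExtNe w i z x

/- Both `F⁺(x)` and `F⁻(S x)` are read off one ladder of vertices of `x = (t,u)`: the
integers in `[u - w, t]` congruent to `t` modulo `|d|`. As `j` runs over the `|d|` values
`w, …, 0`, each endpoint of `Σ^j y` runs once through every residue class modulo `|d|`, so some
`Ext^j(x,y)` is nonzero iff `u ≤ y.1 ≤ t` with `y.2 ≤ u`, or `u ≤ y.2 ≤ t` with `t ≤ y.1`; for
arcs these two configurations are exactly crossing or sharing a vertex. -/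

lemma le_of_dvd_sub_of_sub_lt {m a b : ℤ} (h : m ∣ b - a) (hlt : a - b < m) : a ≤ b := by
  by_contra! hba
  have := Int.le_of_dvd (sub_pos.2 hba) (dvd_sub_comm.1 h)
  omega

lemma exists_shift_dvd {m : ℤ} (hm : 0 < m) (c v : ℤ) :
    ∃ j, 1 - m ≤ j ∧ j ≤ 0 ∧ m ∣ c - (v - j) := by
  refine ⟨-((c - v) % m), ?_, ?_, ⟨(c - v) / m, ?_⟩⟩
  · linarith [Int.emod_lt_of_pos (c - v) hm]
  · linarith [Int.emod_nonneg (c - v) hm.ne']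
  · rw [Int.emod_def]; ring

/-- The common set `{a.1, a.1 + d, …, a.2 - w}` of first coordinates of `F⁺(a)` and of second
coordinates of `F⁻(S a)`. -/
def ladder (w : ℤ) (a : Arc) : Set ℤ := {v | a.2 - w ≤ v ∧ v ≤ a.1 ∧ (1 - w) ∣ a.1 - v}

section
variable {w : ℤ} {a : Arc}

lemma Adm.kk_mul (ha : Adm w a) : kk w a * (1 - w) = a.1 - a.2 + 1 :=
  Int.ediv_mul_cancel ha.2.2

lemma kk_serre : kk w (Serre w a) = kk w a := by
  simp only [kk, Serre, sub_sub_sub_cancel_right]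

lemma mem_ladder_iff_exists_down (hw : w ≤ 0) (ha : Adm w a) {v : ℤ} :
    v ∈ ladder w a ↔ ∃ i, 0 ≤ i ∧ i ≤ kk w a - 1 ∧ v = a.1 + i * (w - 1) := by
  have hk := ha.kk_mul
  constructor
  · rintro ⟨hlo, hhi, i, hi⟩
    exact ⟨i, by nlinarith, by nlinarith, by linarith⟩
  · rintro ⟨i, hi0, hik, rfl⟩
    exact ⟨by nlinarith, by nlinarith, i, by ring⟩

lemma mem_ladder_iff_exists_up (hw : w ≤ 0) (ha : Adm w a) {v : ℤ} :
    v ∈ ladder w a ↔ ∃ i, 0 ≤ i ∧ i ≤ kk w a - 1 ∧ v = a.2 - w - i * (w - 1) := by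
  have hk := ha.kk_mul
  rw [mem_ladder_iff_exists_down hw ha]
  constructor <;> rintro ⟨i, hi0, hik, rfl⟩
  · exact ⟨kk w a - 1 - i, by omega, by omega, by linear_combination -hk⟩
  · exact ⟨kk w a - 1 - i, by omega, by omega, by linear_combination hk⟩

lemma Adm.shift (ha : Adm w a) (j : ℤ) : Adm w (a.1 - j, a.2 - j) := by
  simpa only [Adm, sub_sub_sub_cancel_right, sub_lt_sub_iff_right] using ha

lemma fplus_iff (hw : w ≤ 0) (ha : Adm w a) {c : Arc} :
    Fplus w a c ↔ Adm w c ∧ c.1 ∈ ladder w a ∧ c.2 ≤ a.2 := by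
  rw [Fplus, mem_ladder_iff_exists_down hw ha]

lemma fminus_serre_iff (hw : w ≤ 0) (ha : Adm w a) {c : Arc} :
    Fminus w (Serre w a) c ↔ Adm w c ∧ c.2 ∈ ladder w a ∧ a.1 - w ≤ c.1 := by
  rw [Fminus, kk_serre, mem_ladder_iff_exists_up hw ha]
  rfl

end

section
variable {w : ℤ} {x y : Arc}

lemma extNe_iff (hw : w ≤ 0) (hx : Adm w x) (hy : Adm w y) (j : ℤ) :
    ExtNe w j x y ↔
      (y.1 - j ∈ ladder w x ∧ y.2 - j ≤ x.2) ∨ (y.2 - j ∈ ladder w x ∧ x.1 - w ≤ y.1 - j) := by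
  simp only [ExtNe, HomNe, fplus_iff hw hx, fminus_serre_iff hw hx, hy.shift j, true_and]

lemma exists_fst_shift_mem_ladder_iff (hw : w ≤ 0) (hx : Adm w x) (hy : Adm w y) :
    (∃ j, w ≤ j ∧ j ≤ 0 ∧ y.1 - j ∈ ladder w x ∧ y.2 - j ≤ x.2) ↔
      x.2 ≤ y.1 ∧ y.1 ≤ x.1 ∧ y.2 ≤ x.2 := by
  obtain ⟨t, u⟩ := x
  obtain ⟨a, b⟩ := y
  have hdx := hx.2.2
  have hdy := hy.2.2
  dsimp only at *
  constructor
  · rintro ⟨j, hwj, hj0, ⟨hlo, hhi, -⟩, hb⟩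
    omega
  · rintro ⟨hua, hat, hbu⟩
    obtain ⟨j, hwj, hj0, hdvd⟩ := exists_shift_dvd (m := 1 - w) (by omega) t a
    refine ⟨j, by omega, hj0, ⟨?_, ?_, hdvd⟩, ?_⟩
    · refine le_of_dvd_sub_of_sub_lt (m := 1 - w) ?_ (by omega)
      rw [show a - j - (u - w) = t - u + 1 - (1 - w) - (t - (a - j)) by ring]
      exact dvd_sub (dvd_sub hdx dvd_rfl) hdvd
    · exact le_of_dvd_sub_of_sub_lt hdvd (by omega)
    · refine le_of_dvd_sub_of_sub_lt (m := 1 - w) ?_ (by omega)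
      rw [show u - (b - j) = t - (a - j) - (t - u + 1) + (a - b + 1) by ring]
      exact dvd_add (dvd_sub hdvd hdx) hdy

lemma exists_snd_shift_mem_ladder_iff (hw : w ≤ 0) (hx : Adm w x) (hy : Adm w y) :
    (∃ j, w ≤ j ∧ j ≤ 0 ∧ y.2 - j ∈ ladder w x ∧ x.1 - w ≤ y.1 - j) ↔
      x.2 ≤ y.2 ∧ y.2 ≤ x.1 ∧ x.1 ≤ y.1 := by
  obtain ⟨t, u⟩ := x
  obtain ⟨a, b⟩ := y
  have hdx := hx.2.2
  have hdy := hy.2.2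
  dsimp only at *
  constructor
  · rintro ⟨j, hwj, hj0, ⟨hlo, hhi, -⟩, ha⟩
    omega
  · rintro ⟨hub, hbt, hta⟩
    obtain ⟨j, hwj, hj0, hdvd⟩ := exists_shift_dvd (m := 1 - w) (by omega) t b
    refine ⟨j, by omega, hj0, ⟨?_, ?_, hdvd⟩, ?_⟩
    · refine le_of_dvd_sub_of_sub_lt (m := 1 - w) ?_ (by omega)
      rw [show b - j - (u - w) = t - u + 1 - (1 - w) - (t - (b - j)) by ring]
      exact dvd_sub (dvd_sub hdx dvd_rfl) hdvd
    · exact le_of_dvd_sub_of_sub_lt hdvd (by omega)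
    · refine le_of_dvd_sub_of_sub_lt (m := 1 - w) ?_ (by omega)
      rw [show a - j - (t - w) = a - b + 1 - (t - (b - j)) - (1 - w) by ring]
      exact dvd_sub (dvd_sub hdy hdvd) dvd_rfl

lemma exists_extNe_iff (hw : w ≤ 0) (hx : Adm w x) (hy : Adm w y) :
    (∃ j, w ≤ j ∧ j ≤ 0 ∧ ExtNe w j x y) ↔ Cross x y ∨ ShareVertex x y := by
  simp only [extNe_iff hw hx hy, and_or_left, exists_or,
    exists_fst_shift_mem_ladder_iff hw hx hy, exists_snd_shift_mem_ladder_iff hw hx hy]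
  have := hx.1
  have := hy.1
  unfold Cross ShareVertex
  omega

end

/-- Lemma 3.1: `Ext^i(x,y) = 0` for all `i ∈ {w, …, 0}` iff `x` and `y` do not cross
and do not share a vertex. -/
theorem stmt2 (w : ℤ) (hw : w ≤ -1) (x y : Arc) (hx : Adm w x) (hy : Adm w y) :
    (∀ i : ℤ, w ≤ i → i ≤ 0 → ¬ ExtNe w i x y) ↔
      (¬ Cross x y ∧ ¬ ShareVertex x y) := by
  rw [← not_or, ← exists_extNe_iff (by omega) hx hy]
  simp only [not_exists, not_and]

end SphericalArcs
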